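/- For c = 2/π, the function f_c(t) = (t⁴−1)/(c t⁴ + (2−c) t³ + (2−c) t + c) − 2 arctan((t−1)/(t+1)) satisfies f_c(t) < 0 for all t > 1. -/

import Mathlib

/-!
In the Cayley coordinate `u = (t - 1) / (t + 1) ∈ (0, 1)` one has
`f c t = 2 (2u(1 + u²) / (2 + 6cu² + (2c - 2)u⁴) - arctan u)`.
For `t ≤ 3` (i.e. `u ≤ 1/2`) the Taylor bound `u - u³/3 ≤ arctan u` beats the rational term as soon
as `c > 19/36`. For `t ≥ 3` we use `arctan ((t - 1) / (t + 1)) = π/4 - arctan t⁻¹ ≥ π/4 - t⁻¹`;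
with `c = 2/π` the claim becomes a quartic inequality in `t` whose expansion around `t = 3` has
positive coefficients. The constant `2/π` is exactly the one for which `f c t → 0` as `t → ∞`,
so only the second range needs its precise value.
-/

noncomputable def f (c t : ℝ) : ℝ :=
  (t ^ 4 - 1) / (c * t ^ 4 + (2 - c) * t ^ 3 + (2 - c) * t + c)
    - 2 * Real.arctan ((t - 1) / (t + 1))

open Real

lemma arctan_le_self {x : ℝ} (hx : 0 ≤ x) : arctan x ≤ x := by
  simpa [tan_arctan] using le_tan (arctan_nonneg.2 hx) (arctan_lt_pi_div_two x)

lemma sub_pow_three_div_three_le_arctan {x : ℝ} (hx : 0 ≤ x) : x - x ^ 3 / 3 ≤ arctan x := by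
  have hderiv (y : ℝ) :
      HasDerivAt (fun y => arctan y - (y - y ^ 3 / 3)) (y ^ 4 / (1 + y ^ 2)) y := by
    refine ((hasDerivAt_arctan y).sub
      ((hasDerivAt_id' y).sub ((hasDerivAt_pow 3 y).div_const 3))).congr_deriv ?_
    field_simp
    ring
  have := monotone_of_hasDerivAt_nonneg hderiv (fun y => by positivity) hx
  simp only [arctan_zero] at this
  linarith

lemma arctan_div_add_arctan_inv {t : ℝ} (ht : 0 < t) :
    arctan ((t - 1) / (t + 1)) + arctan t⁻¹ = π / 4 := by
  have ht₁ : 0 < t + 1 := by linarith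
  have hprod : (t - 1) / (t + 1) * t⁻¹ < 1 := by
    rw [div_mul_eq_mul_div, div_lt_one (by positivity), ← div_eq_mul_inv, div_lt_iff₀ ht]
    nlinarith
  have hsum : ((t - 1) / (t + 1) + t⁻¹) / (1 - (t - 1) / (t + 1) * t⁻¹) = 1 := by
    rw [div_eq_one_iff_eq (by linarith)]
    field_simp
    ring
  rw [arctan_add hprod, hsum, arctan_one]

lemma f_eq_of_eq_div {c t u : ℝ} (ht : t + 1 ≠ 0) (hu : u = (t - 1) / (t + 1)) :
    f c t = 2 * (2 * u * (1 + u ^ 2) / (2 + 6 * c * u ^ 2 + (2 * c - 2) * u ^ 4) - arctan u) := by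
  have hnum : t ^ 4 - 1 = 4 * u * (1 + u ^ 2) * ((t + 1) ^ 4 / 8) := by
    rw [hu]; field_simp; ring
  have hden : c * t ^ 4 + (2 - c) * t ^ 3 + (2 - c) * t + c
      = (2 + 6 * c * u ^ 2 + (2 * c - 2) * u ^ 4) * ((t + 1) ^ 4 / 8) := by
    rw [hu]; field_simp; ring
  rw [f, hnum, hden, mul_div_mul_right _ _ (by positivity), ← hu]
  ring

lemma f_neg_of_le_three {c t : ℝ} (hc₀ : 19 / 36 < c) (hc₁ : c ≤ 1) (ht₁ : 1 < t) (ht₃ : t ≤ 3) :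
    f c t < 0 := by
  set u := (t - 1) / (t + 1) with hu
  have ht : 0 < t + 1 := by linarith
  have hu₀ : 0 < u := div_pos (by linarith) ht
  have hu₁ : u ≤ 1 / 2 := by rw [hu, div_le_iff₀ ht]; linarith
  have hu₂ : u ^ 2 ≤ 1 / 4 := by nlinarith
  have hu₄ : u ^ 4 ≤ 1 / 16 := by nlinarith
  have hQ : 0 < 2 + 6 * c * u ^ 2 + (2 * c - 2) * u ^ 4 := by
    nlinarith [mul_nonneg (by linarith : 0 ≤ c) (sq_nonneg u)]
  have hgap : 0 < 6 * c - 8 / 3 - 2 * u ^ 2 + (2 - 2 * c) / 3 * u ^ 4 := by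
    nlinarith [mul_nonneg (by linarith : 0 ≤ 2 - 2 * c) (pow_nonneg hu₀.le 4)]
  -- `(u - u³/3) Q - 2u(1 + u²) = u³ (6c - 8/3 - 2u² + (2 - 2c) u⁴ / 3)`
  have htaylor :
      2 * u * (1 + u ^ 2) < (u - u ^ 3 / 3) * (2 + 6 * c * u ^ 2 + (2 * c - 2) * u ^ 4) := by
    linear_combination mul_pos (pow_pos hu₀ 3) hgap
  have hratio : 2 * u * (1 + u ^ 2) / (2 + 6 * c * u ^ 2 + (2 * c - 2) * u ^ 4) < arctan u := by
    rw [div_lt_iff₀ hQ]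
    exact htaylor.trans_le
      (mul_le_mul_of_nonneg_right (sub_pow_three_div_three_le_arctan hu₀.le) hQ.le)
  rw [f_eq_of_eq_div ht.ne' hu]
  linarith

lemma f_two_div_pi_neg_of_three_le {t : ℝ} (ht : 3 ≤ t) : f (2 / π) t < 0 := by
  have ht₀ : 0 < t := by linarith
  have hπ : 3.14 < π := pi_gt_d2
  have hpoly : 0 < (π ^ 2 - π - 4) * t ^ 4 - (4 * π - 4) * t ^ 3 + (π ^ 2 - π) * t ^ 2
      - (2 * π - 4) * t - 4 := by
    -- the coefficients of the expansion in `s = t - 3`, all increasing in `π` for `π ≥ 3.14`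
    obtain ⟨s, hs, rfl⟩ : ∃ s, 0 ≤ s ∧ t = s + 3 := ⟨t - 3, by linarith, by ring⟩
    have h₀ : 0 < 90 * π ^ 2 - 204 * π - 208 := by nlinarith
    have h₁ : 0 ≤ 114 * π ^ 2 - 224 * π - 320 := by nlinarith
    have h₂ : 0 ≤ 55 * π ^ 2 - 91 * π - 180 := by nlinarith
    have h₃ : 0 ≤ 12 * π ^ 2 - 16 * π - 44 := by nlinarith
    have h₄ : 0 ≤ π ^ 2 - π - 4 := by nlinarith
    linear_combination h₀ + mul_nonneg h₁ hs + mul_nonneg h₂ (pow_nonneg hs 2)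
      + mul_nonneg h₃ (pow_nonneg hs 3) + mul_nonneg h₄ (pow_nonneg hs 4)
  have hD : 0 < 2 / π * t ^ 4 + (2 - 2 / π) * t ^ 3 + (2 - 2 / π) * t + 2 / π := by
    have : 2 / π < 1 := by rw [div_lt_one pi_pos]; linarith
    have : 0 < 2 / π := by positivity
    nlinarith [pow_pos ht₀ 3, pow_pos ht₀ 4]
  have hratio : (t ^ 4 - 1) / (2 / π * t ^ 4 + (2 - 2 / π) * t ^ 3 + (2 - 2 / π) * t + 2 / π)
      < 2 * (π / 4 - t⁻¹) := by
    rw [div_lt_iff₀ hD, ← sub_pos]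
    convert div_pos hpoly (mul_pos pi_pos ht₀) using 1
    field_simp
    ring
  have harctan : π / 4 - t⁻¹ ≤ arctan ((t - 1) / (t + 1)) := by
    linarith [arctan_div_add_arctan_inv ht₀, arctan_le_self (inv_nonneg.2 ht₀.le)]
  rw [f]
  linarith

theorem stmt_12 : ∀ t : ℝ, 1 < t → f (2 / Real.pi) t < 0 := by
  intro t ht
  rcases le_or_gt t 3 with ht₃ | ht₃
  · have hπ : π < 72 / 19 := by linarith [pi_lt_d2]
    refine f_neg_of_le_three ?_ ?_ ht ht₃
    · rw [lt_div_iff₀ pi_pos]; linarith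
    · rw [div_le_one pi_pos]; linarith [pi_gt_three]
  · exact f_two_div_pi_neg_of_three_le ht₃.le
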